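/- The Euclidean helicoid H_c = {(x,y,z) : y = x·tan((κ/(4τ))(c−1)z)} maps under Θ(x,y,z) = (1/√(1+(κ/4)(x²+y²)))·((√κ/2)(x+iy)e^{i(κ/(4τ))z}, e^{i(κ/(4τ))z}) into the set {(z,w) ∈ 𝕊³ : Im(z·conj(w)^c) = 0} (the spherical helicoid), for every c ∈ ℝ for which conj(w)^c is interpreted via conj(w)^c = e^{c·log(conj(w))} along the image (where w = e^{i(κ/(4τ))z}/√(1+(κ/4)(x²+y²)) has positive modulus). In particular, for c = 0 the image lies in the great sphere {Im z = 0}, and for c = 1 in the Clifford torus {Im(z·conj(w)) = 0}. -/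

import Mathlib

open Real Complex

noncomputable section

/-- The covering map `Θ : D_κ × ℝ → 𝕊³ ⊂ ℂ²` of the paper. -/
def ThetaMap (κ τ x y z : ℝ) : ℂ × ℂ :=
  ((1 / Real.sqrt (1 + κ/4 * (x^2 + y^2)) : ℝ) *
      ((Real.sqrt κ / 2 : ℝ) * (x + y * Complex.I) * Complex.exp (Complex.I * (κ/(4*τ) * z : ℝ))),
   (1 / Real.sqrt (1 + κ/4 * (x^2 + y^2)) : ℝ) * Complex.exp (Complex.I * (κ/(4*τ) * z : ℝ)))

/-- The power `conj(w)^c = exp(c·log(conj w))` computed with the continuous branch of the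
logarithm along the image of `Θ`, where `conj W` has modulus `|W| > 0` and argument
`−(κ/(4τ))z`. -/
def conjPow (κ τ z c : ℝ) (W : ℂ) : ℂ :=
  Complex.exp ((c : ℂ) * ((Real.log ‖W‖ : ℂ) + Complex.I * (-(κ/(4*τ) * z) : ℝ)))

end

lemma im_aux (r x y φ : ℝ) :
    (((r : ℝ) : ℂ) * ((x : ℂ) + (y : ℂ) * Complex.I) * Complex.exp (Complex.I * (φ : ℂ))).im
      = r * (x * Real.sin φ + y * Real.cos φ) := by
  rw [mul_comm Complex.I (φ : ℂ), Complex.exp_mul_I, ← Complex.ofReal_cos, ← Complex.ofReal_sin]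
  simp [Complex.ext_iff, Complex.mul_im, Complex.mul_re, Complex.cos_ofReal_re,
    Complex.sin_ofReal_re]
  ring


/-- The Euclidean helicoid `{y = x·tan((κ/(4τ))(c−1)z)}` (including the axis points
`x = y = 0`) maps under `Θ` into the spherical helicoid `{Im(z·conj(w)^c) = 0}`; in
particular for `c = 0` into the great sphere `{Im z = 0}` and for `c = 1` into the
Clifford torus `{Im(z·conj w) = 0}`. -/
theorem stmt19 (κ τ c x y z : ℝ) (hκ : 0 < κ) (hτ : τ ≠ 0)
    (hD : 0 < 1 + κ/4 * (x^2 + y^2))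
    (hcurve : (Real.cos (κ/(4*τ) * (c-1) * z) ≠ 0 ∧ y = x * Real.tan (κ/(4*τ) * (c-1) * z))
      ∨ (x = 0 ∧ y = 0)) :
    ((ThetaMap κ τ x y z).1 * conjPow κ τ z c (ThetaMap κ τ x y z).2).im = 0 ∧
    (c = 0 → ((ThetaMap κ τ x y z).1).im = 0) ∧
    (c = 1 → ((ThetaMap κ τ x y z).1 * (starRingEnd ℂ) (ThetaMap κ τ x y z).2).im = 0) := by
  have ha : 0 < Real.sqrt (1 + κ/4 * (x^2 + y^2)) := Real.sqrt_pos.mpr hD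
  have hs : 0 < 1 / Real.sqrt (1 + κ/4 * (x^2 + y^2)) := by positivity
  have hre : (Complex.I * ((κ/(4*τ) * z : ℝ) : ℂ)).re = 0 := by
    simp only [Complex.mul_re, Complex.I_re, Complex.I_im, Complex.ofReal_re, Complex.ofReal_im]
    ring
  -- |W| = 1/a
  have habsW : ‖(ThetaMap κ τ x y z).2‖ = 1 / Real.sqrt (1 + κ/4 * (x^2 + y^2)) := by
    simp only [ThetaMap, norm_mul, Complex.norm_exp, hre, Real.exp_zero, mul_one,
      Complex.norm_real, Real.norm_eq_abs]
    rw [abs_of_pos hs]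
  -- the trig vanishing
  have hzero : x * Real.sin ((1-c) * (κ/(4*τ) * z)) + y * Real.cos ((1-c) * (κ/(4*τ) * z)) = 0 := by
    rcases hcurve with ⟨hcos, hy⟩ | ⟨hx, hy⟩
    · have harg : κ/(4*τ) * (c-1) * z = (c-1) * (κ/(4*τ) * z) := by ring
      rw [harg] at hcos hy
      rw [hy, Real.tan_eq_sin_div_cos,
        show (1-c) * (κ/(4*τ) * z) = -((c-1) * (κ/(4*τ) * z)) by ring,
        Real.sin_neg, Real.cos_neg, mul_assoc x, div_mul_cancel₀ _ hcos]
      ring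
    · simp [hx, hy]
  set a := Real.sqrt (1 + κ/4 * (x^2 + y^2)) with hA
  have heq : (ThetaMap κ τ x y z).1 * conjPow κ τ z c (ThetaMap κ τ x y z).2
      = ((1/a * Real.exp (c * Real.log (1/a)) * (Real.sqrt κ / 2) : ℝ) : ℂ)
        * ((x : ℂ) + (y : ℂ) * Complex.I)
        * Complex.exp (Complex.I * (((1-c) * (κ/(4*τ) * z) : ℝ) : ℂ)) := by
    simp only [conjPow]
    rw [habsW]
    simp only [ThetaMap]
    rw [show (((1/a : ℝ) : ℂ) * (((Real.sqrt κ / 2 : ℝ) : ℂ) * ((x : ℂ) + (y:ℂ) * Complex.I)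
        * Complex.exp (Complex.I * ((κ/(4*τ) * z : ℝ) : ℂ))))
        * Complex.exp ((c:ℂ) * (((Real.log (1/a) : ℝ) : ℂ) + Complex.I * ((-(κ/(4*τ) * z) : ℝ) : ℂ)))
      = ((1/a : ℝ) : ℂ) * (((Real.sqrt κ / 2 : ℝ) : ℂ) * ((x : ℂ) + (y:ℂ) * Complex.I))
        * (Complex.exp (Complex.I * ((κ/(4*τ) * z : ℝ) : ℂ))
           * Complex.exp ((c:ℂ) * (((Real.log (1/a) : ℝ) : ℂ) + Complex.I * ((-(κ/(4*τ) * z) : ℝ) : ℂ)))) from by ring]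
    rw [← Complex.exp_add,
      show Complex.I * ((κ/(4*τ) * z : ℝ) : ℂ)
          + (c:ℂ) * (((Real.log (1/a) : ℝ) : ℂ) + Complex.I * ((-(κ/(4*τ) * z) : ℝ) : ℂ))
        = ((c * Real.log (1/a) : ℝ) : ℂ) + Complex.I * (((1-c) * (κ/(4*τ) * z) : ℝ) : ℂ) from by
          push_cast; ring,
      Complex.exp_add, ← Complex.ofReal_exp]
    push_cast
    ring
  have hmain : ((ThetaMap κ τ x y z).1 * conjPow κ τ z c (ThetaMap κ τ x y z).2).im = 0 := by
    rw [heq, im_aux, hzero, mul_zero]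
  refine ⟨hmain, ?_, ?_⟩
  · intro hc
    subst hc
    simpa [conjPow] using hmain
  · intro hc
    subst hc
    have h1 : (starRingEnd ℂ) (ThetaMap κ τ x y z).2
        = ((1/a : ℝ) : ℂ) * Complex.exp (Complex.I * ((-(κ/(4*τ) * z) : ℝ) : ℂ)) := by
      simp only [ThetaMap, map_mul, ← Complex.exp_conj, Complex.conj_ofReal, Complex.conj_I, ← hA]
      push_cast
      ring_nf
    have h2 : conjPow κ τ z 1 (ThetaMap κ τ x y z).2
        = ((1/a : ℝ) : ℂ) * Complex.exp (Complex.I * ((-(κ/(4*τ) * z) : ℝ) : ℂ)) := by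
      simp only [conjPow]
      rw [habsW, Complex.ofReal_one, one_mul, Complex.exp_add, ← Complex.ofReal_exp, Real.exp_log hs]
    rw [h1, ← h2]
    exact hmain
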